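/- arXiv:2512.11514 — 6 statements merged into one kernel-verified Lean document; each statement's English description precedes it below -/
import Mathlib

section
/- Consider a commutative square of topological spaces with continuous maps f₁: Z → Y, h₁: Z → X, f₂: X → S, h₂: Y → S satisfying h₂ ∘ f₁ = f₂ ∘ h₁, such that h₁ and h₂ are r-sheeted covering maps, and such that for every x ∈ X, if z₁,…,z_r are the distinct lifts of x under h₁, then the images f₁(z₁),…,f₁(z_r) are pairwise distinct. Then for every i ≥ 0, the transfer (pushforward along h₁) composed with pullback along f₁ equals pullback along f₂ composed with transfer along h₂, as maps from the i-th singular cohomology of Y with integer coefficients to the i-th singular cohomology of X. -/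
/-!
Both sums run over finite sets of lifts, and post-composition with `f₁` is a bijection between
them. It is injective because `f₁` separates the points of each `h₁`-fibre. For surjectivity,
`f₁` maps each `h₁`-fibre injectively into the `h₂`-fibre of the same size `r`, hence onto it,
so a lift `ω` of `f₂ ∘ σ` has a unique pointwise preimage `τ` lying over `σ`. Locally `τ` agrees
with a local section of `h₁` composed with `σ`, by uniqueness of lifts along `h₂` on connected
neighbourhoods in the simplex, so `τ` is continuous.
-/

open Set

theorem Set.surjOn_of_injOn_of_ncard_eq {α β : Type*} {f : α → β} {s : Set α} {t : Set β}
    (hm : MapsTo f s t) (hi : InjOn f s) (ht : t.Finite) (hc : s.ncard = t.ncard) :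
    SurjOn f s t := by
  have himage : f '' s = t :=
    eq_of_subset_of_ncard_le hm.image_subset (by rw [hi.ncard_image, hc]) ht
  exact himage ▸ surjOn_image f s

theorem Convex.locallyConnectedSpace {E : Type*} [SeminormedAddCommGroup E] [NormedSpace ℝ E]
    {s : Set E} (hs : Convex ℝ s) : LocallyConnectedSpace s := by
  refine locallyConnectedSpace_of_connected_bases (fun x ε => Metric.ball x ε) (fun _ ε => 0 < ε)
    (fun x => Metric.nhds_basis_ball) fun x ε _ => ?_
  rw [← Topology.IsInducing.subtypeVal.isPreconnected_image]
  change IsPreconnected (Subtype.val '' (Subtype.val ⁻¹' Metric.ball (x : E) ε))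
  rw [Subtype.image_preimage_coe]
  exact (hs.inter (convex_ball _ _)).isPreconnected

instance {ι : Type*} [Fintype ι] : LocallyConnectedSpace (stdSimplex ℝ ι) :=
  (convex_stdSimplex ℝ ι).locallyConnectedSpace

section CoveringSquare

variable {X Y Z S A : Type*} [TopologicalSpace X] [TopologicalSpace Y] [TopologicalSpace Z]
  [TopologicalSpace S] [TopologicalSpace A]
  {f₁ : C(Z, Y)} {h₁ : C(Z, X)} {f₂ : C(X, S)} {h₂ : C(Y, S)}

/-- Near `τ t₀` the map `τ` must be the local section of `h₁` through `τ t₀` composed with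
`h₁ ∘ τ`: pushed forward by `f₁`, both are lifts of the same map along `h₂` agreeing at `t₀`. -/
theorem continuous_of_continuous_comp_of_continuous_comp [LocallyConnectedSpace A]
    (hcomm : ∀ z, h₂ (f₁ z) = f₂ (h₁ z)) (hinj : ∀ x, (h₁ ⁻¹' {x}).InjOn f₁)
    (hh₁ : IsLocalHomeomorph h₁) (hh₂ : IsCoveringMap h₂) {τ : A → Z}
    (hσ : Continuous (h₁ ∘ τ)) (hω : Continuous (f₁ ∘ τ)) : Continuous τ := by
  refine continuous_iff_continuousAt.mpr fun t₀ => ?_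
  obtain ⟨e, hτt₀, he⟩ := hh₁ (τ t₀)
  have hh₁e : ∀ z, h₁ z = e z := congrFun he
  have hsection : ∀ x ∈ e.target, h₁ (e.symm x) = x := fun x hx => by
    rw [hh₁e, e.right_inv hx]
  have hσt₀ : h₁ (τ t₀) ∈ e.target := by
    rw [hh₁e]
    exact e.map_source hτt₀
  have htarget : h₁ ∘ τ ⁻¹' e.target ∈ nhds t₀ :=
    hσ.continuousAt.preimage_mem_nhds (e.open_target.mem_nhds hσt₀)
  obtain ⟨N, hN, hNconn, hNtarget⟩ := locallyConnectedSpace_iff_connected_subsets.mp ‹_› t₀ _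
    htarget
  have hf₁ : EqOn (f₁ ∘ τ) (f₁ ∘ e.symm ∘ h₁ ∘ τ) N := by
    refine hh₂.eqOn_of_comp_eqOn hNconn hω.continuousOn ?_ (fun t ht => ?_) (mem_of_mem_nhds hN) ?_
    · exact f₁.continuous.comp_continuousOn (e.continuousOn_symm.comp hσ.continuousOn hNtarget)
    · simp only [Function.comp_apply, hcomm, hsection (h₁ (τ t)) (hNtarget ht)]
    · simp only [Function.comp_apply, hh₁e, e.left_inv hτt₀]
  have hlocal : EqOn τ (e.symm ∘ h₁ ∘ τ) N := fun t ht =>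
    hinj (h₁ (τ t)) rfl (hsection _ (hNtarget ht)) (hf₁ ht)
  have hcont : ContinuousAt (e.symm ∘ h₁ ∘ τ) t₀ :=
    ContinuousAt.comp (g := e.symm) (e.symm.continuousAt hσt₀) hσ.continuousAt
  exact hcont.congr (Filter.eventuallyEq_of_mem hN hlocal).symm

def compLifts (hcomm : ∀ z, h₂ (f₁ z) = f₂ (h₁ z)) (σ : C(A, X)) :
    {τ : C(A, Z) // h₁.comp τ = σ} → {ω : C(A, Y) // h₂.comp ω = f₂.comp σ} :=
  fun τ => ⟨f₁.comp τ, ContinuousMap.ext fun t => by simp [hcomm, ← τ.2]⟩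

theorem compLifts_injective (hcomm : ∀ z, h₂ (f₁ z) = f₂ (h₁ z))
    (hinj : ∀ x, (h₁ ⁻¹' {x}).InjOn f₁) (σ : C(A, X)) :
    Function.Injective (compLifts hcomm σ) := by
  rintro ⟨τ, hτ⟩ ⟨τ', hτ'⟩ h
  refine Subtype.ext (ContinuousMap.ext fun t => hinj (σ t) ?_ ?_
    (ContinuousMap.congr_fun (congrArg Subtype.val h) t))
  · exact ContinuousMap.congr_fun hτ t
  · exact ContinuousMap.congr_fun hτ' t

theorem compLifts_surjective [LocallyConnectedSpace A] (hcomm : ∀ z, h₂ (f₁ z) = f₂ (h₁ z))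
    (hinj : ∀ x, (h₁ ⁻¹' {x}).InjOn f₁) (hsurj : ∀ x, (h₁ ⁻¹' {x}).SurjOn f₁ (h₂ ⁻¹' {f₂ x}))
    (hh₁ : IsLocalHomeomorph h₁) (hh₂ : IsCoveringMap h₂) (σ : C(A, X)) :
    Function.Surjective (compLifts hcomm σ) := by
  rintro ⟨ω, hω⟩
  choose τ hτσ hτω using fun t => hsurj (σ t) (ContinuousMap.congr_fun hω t)
  have hτ : Continuous τ := by
    refine continuous_of_continuous_comp_of_continuous_comp hcomm hinj hh₁ hh₂ ?_ ?_
    · rw [show h₁ ∘ τ = σ from funext hτσ]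
      exact σ.continuous
    · rw [show f₁ ∘ τ = ω from funext hτω]
      exact ω.continuous
  exact ⟨⟨⟨τ, hτ⟩, ContinuousMap.ext hτσ⟩, Subtype.ext (ContinuousMap.ext hτω)⟩

end CoveringSquare

/-- Consider a commutative square of topological spaces
`h₂ ∘ f₁ = f₂ ∘ h₁` in which `h₁ : Z → X` and `h₂ : Y → S` are `r`-sheeted covering maps,
and such that distinct lifts under `h₁` of any point of `X` have distinct images under
`f₁`.  Then, for every `i ≥ 0`, transfer (pushforward, summing a cochain over all lifts
of a singular simplex) along `h₁` composed with pullback along `f₁` equals pullback along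
`f₂` composed with transfer along `h₂`, on singular `i`-cochains with `ℤ`-coefficients
(hence on `i`-th singular cohomology).  Singular `i`-simplices in a space `W` are
continuous maps `C(Δ^i, W)` from the standard `i`-simplex, and `i`-cochains are arbitrary
`ℤ`-valued functions on them; the (finite) sums over lifts are expressed as `finsum`s. -/
theorem stmt_1
    (X Y Z S : Type*) [TopologicalSpace X] [TopologicalSpace Y]
    [TopologicalSpace Z] [TopologicalSpace S]
    (f₁ : C(Z, Y)) (h₁ : C(Z, X)) (f₂ : C(X, S)) (h₂ : C(Y, S))
    (hcomm : ∀ z : Z, h₂ (f₁ z) = f₂ (h₁ z))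
    (r : ℕ) (hr : 0 < r)
    (hcov₁ : IsCoveringMap h₁) (hcard₁ : ∀ x : X, Nat.card (h₁ ⁻¹' {x}) = r)
    (hcov₂ : IsCoveringMap h₂) (hcard₂ : ∀ s : S, Nat.card (h₂ ⁻¹' {s}) = r)
    (hdist : ∀ z z' : Z, h₁ z = h₁ z' → z ≠ z' → f₁ z ≠ f₁ z')
    (i : ℕ)
    (φ : C(↥(stdSimplex ℝ (Fin (i + 1))), Y) → ℤ)
    (σ : C(↥(stdSimplex ℝ (Fin (i + 1))), X)) :
    ∑ᶠ σ' : {τ : C(↥(stdSimplex ℝ (Fin (i + 1))), Z) // h₁.comp τ = σ},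
        φ (f₁.comp σ'.1)
      = ∑ᶠ ω' : {τ : C(↥(stdSimplex ℝ (Fin (i + 1))), Y) // h₂.comp τ = f₂.comp σ},
          φ ω'.1 := by
  have hinj : ∀ x, (h₁ ⁻¹' {x}).InjOn f₁ := fun x z hz z' hz' hzz' =>
    by_contra fun hne => hdist z z' (hz.trans hz'.symm) hne hzz'
  have hsurj : ∀ x, (h₁ ⁻¹' {x}).SurjOn f₁ (h₂ ⁻¹' {f₂ x}) := by
    intro x
    refine surjOn_of_injOn_of_ncard_eq (fun z hz => ?_) (hinj x) ?_ ?_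
    · exact (hcomm z).trans (congrArg f₂ hz)
    · exact Nat.finite_of_card_ne_zero (by rw [hcard₂]; omega)
    · simp only [← Nat.card_coe_set_eq, hcard₁, hcard₂]
  exact finsum_eq_of_bijective (compLifts hcomm σ)
    ⟨compLifts_injective hcomm hinj σ,
      compLifts_surjective hcomm hinj hsurj hcov₁.isLocalHomeomorph hcov₂ σ⟩ fun _ => rfl
end

section
/- Let p be an odd prime, m ≥ 1 an integer, and let H, H' be Q_p-rational hyperplanes in P^{n-1}(C_p) with unimodular defining linear forms ℓ_H, ℓ_{H'} ∈ Z_p^n that are congruent modulo p^{m+1}. Then for every z in the affinoid X_p^{≤m} = { z ∈ P^{n-1}(C_p) : ord_p(ℓ_K(z)) ≤ m for all Q_p-rational hyperplanes K } (with z represented by a unimodular vector), one has ord_p((ℓ_{H'}(z) − ℓ_H(z))/ℓ_{H'}(z)) ≥ 1, and consequently the function z ↦ log_p(ℓ_H(z)/ℓ_{H'}(z)) is given by the uniformly convergent series Σ_{k≥1} (1/k)·((ℓ_{H'}(z) − ℓ_H(z))/ℓ_{H'}(z))^k and is a rigid analytic function on X_p^{≤m}. -/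
/-!
Put `u = (ℓ_{H'}(z) - ℓ_H(z)) / ℓ_{H'}(z)`. The form `ℓ_{H'} - ℓ_H` has coefficients of norm
at most `p^{-(m+1)}` and the coordinates of `z` have norm at most `1`, so the ultrametric inequality gives
`‖ℓ_{H'}(z) - ℓ_H(z)‖ ≤ p^{-(m+1)}`, while `z ∈ 𝒳_p^{≤m}` gives `‖ℓ_{H'}(z)‖ ≥ p^{-m}`.
Hence `‖u‖ ≤ p⁻¹ < 1`, and since `ℓ_H(z)/ℓ_{H'}(z) = 1 - u`, the logarithm is the
series of `log (1 - u)`.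
-/

section Ultrametric

variable {K : Type*} [NormedField K] [IsUltrametricDist K]

theorem norm_sum_mul_le_of_norm_le {ι : Type*} (s : Finset ι) {c z : ι → K} {r : ℝ}
    (hr : 0 ≤ r) (hc : ∀ i, ‖c i‖ ≤ r) (hz : ∀ i, ‖z i‖ ≤ 1) :
    ‖∑ i ∈ s, c i * z i‖ ≤ r :=
  IsUltrametricDist.norm_sum_le_of_forall_le_of_nonneg hr fun i _ => by
    simpa [norm_mul] using mul_le_mul (hc i) (hz i) (norm_nonneg _) hr

theorem norm_linearForm_sub_le {F : Type*} [NormedField F] {n : ℕ} (ι : F →+* K)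
    (hι : ∀ x, ‖ι x‖ = ‖x‖) {a b : Fin n → F} {z : Fin n → K} {r : ℝ} (hr : 0 ≤ r)
    (hab : ∀ i, ‖a i - b i‖ ≤ r) (hz : ∀ i, ‖z i‖ ≤ 1) :
    ‖(∑ i, ι (b i) * z i) - ∑ i, ι (a i) * z i‖ ≤ r := by
  have hsum : (∑ i, ι (b i) * z i) - ∑ i, ι (a i) * z i = ∑ i, ι (b i - a i) * z i := by
    simp only [map_sub, sub_mul, Finset.sum_sub_distrib]
  rw [hsum]
  exact norm_sum_mul_le_of_norm_le _ hr (fun i => by rw [hι, norm_sub_rev]; exact hab i) hz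

end Ultrametric

theorem norm_div_le_of_le_mul {K : Type*} [NormedField K] {x y : K} {q s : ℝ} (hq : 0 ≤ q)
    (hs : 0 < s) (hx : ‖x‖ ≤ q * s) (hy : s ≤ ‖y‖) : ‖x / y‖ ≤ q := by
  rw [norm_div, div_le_iff₀ (hs.trans_le hy)]
  exact hx.trans (mul_le_mul_of_nonneg_left hy hq)

theorem zpow_neg_succ_eq_inv_mul (p : ℝ) (hp : p ≠ 0) (m : ℕ) :
    p ^ (-(m + 1 : ℤ)) = p⁻¹ * p ^ (-(m : ℤ)) := by
  rw [neg_add, zpow_add₀ hp, zpow_neg_one, mul_comm]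

theorem hasSum_neg_pow_div_of_hasSum_log {K : Type*} [Field K] [TopologicalSpace K]
    {logp : K → K} {u : K}
    (hlog : HasSum (fun k : ℕ => (-1 : K) ^ k * (-u) ^ (k + 1) / (k + 1 : ℕ))
      (logp (1 + -u))) :
    HasSum (fun k : ℕ => -(u ^ (k + 1) / (k + 1 : ℕ))) (logp (1 - u)) := by
  have hterm : ∀ k : ℕ, (-1 : K) ^ k * (-u) ^ (k + 1) / (k + 1 : ℕ)
      = -(u ^ (k + 1) / (k + 1 : ℕ)) := fun k => by
    rw [neg_pow u, ← mul_assoc, ← pow_add, Odd.neg_one_pow ⟨k, by ring⟩]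
    ring
  simpa only [hterm, ← sub_eq_add_neg] using hlog

theorem stmt_3_general
    (p : ℕ) [Fact p.Prime] (n m : ℕ)
    (K : Type*) [NontriviallyNormedField K] [IsUltrametricDist K]
    (ι : ℚ_[p] →+* K) (hι : ∀ x : ℚ_[p], ‖ι x‖ = ‖x‖)
    (logp : K → K)
    (hlog : ∀ x : K, ‖x‖ < 1 →
        HasSum (fun k : ℕ => (-1 : K) ^ k * x ^ (k + 1) / (k + 1 : ℕ)) (logp (1 + x)))
    (a b : Fin n → ℚ_[p])
    (hb₁ : ∀ i, ‖b i‖ ≤ 1) (hb₂ : ∃ i, ‖b i‖ = 1)      -- ℓ_{H'} unimodular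
    (hcong : ∀ i, ‖a i - b i‖ ≤ (p : ℝ) ^ (-(m + 1 : ℤ)))  -- ℓ_H ≡ ℓ_{H'} mod p^{m+1}
    (z : Fin n → K)
    (hz₁ : ∀ i, ‖z i‖ ≤ 1)
    (hzm : ∀ c : Fin n → ℚ_[p], (∀ i, ‖c i‖ ≤ 1) → (∃ i, ‖c i‖ = 1) →
        (p : ℝ) ^ (-(m : ℤ)) ≤ ‖∑ i, ι (c i) * z i‖) :  -- z ∈ 𝒳_p^{≤m}
    ‖((∑ i, ι (b i) * z i) - ∑ i, ι (a i) * z i) / ∑ i, ι (b i) * z i‖ ≤ (p : ℝ)⁻¹ ∧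
    HasSum
      (fun k : ℕ =>
        -((((∑ i, ι (b i) * z i) - ∑ i, ι (a i) * z i) / ∑ i, ι (b i) * z i) ^ (k + 1)
            / (k + 1 : ℕ)))
      (logp ((∑ i, ι (a i) * z i) / ∑ i, ι (b i) * z i)) := by
  set A := ∑ i, ι (a i) * z i
  set B := ∑ i, ι (b i) * z i
  have hp : (0 : ℝ) < p := Nat.cast_pos.mpr (Fact.out : p.Prime).pos
  have hB : (p : ℝ) ^ (-(m : ℤ)) ≤ ‖B‖ := hzm b hb₁ hb₂
  have hBA : ‖B - A‖ ≤ (p : ℝ)⁻¹ * (p : ℝ) ^ (-(m : ℤ)) := by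
    rw [← zpow_neg_succ_eq_inv_mul _ hp.ne']
    exact norm_linearForm_sub_le ι hι (zpow_pos hp _).le hcong hz₁
  have hu : ‖(B - A) / B‖ ≤ (p : ℝ)⁻¹ :=
    norm_div_le_of_le_mul (inv_nonneg.mpr hp.le) (zpow_pos hp _) hBA hB
  have hu_lt : ‖-((B - A) / B)‖ < 1 := by
    rw [norm_neg]
    exact hu.trans_lt (inv_lt_one_of_one_lt₀ (by exact_mod_cast (Fact.out : p.Prime).one_lt))
  have hBne : B ≠ 0 := norm_pos_iff.mp ((zpow_pos hp _).trans_le hB)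
  have hratio : 1 - (B - A) / B = A / B := by field_simp; ring
  exact ⟨hu, hratio ▸ hasSum_neg_pow_div_of_hasSum_log (hlog _ hu_lt)⟩

/-- Let `p` be an odd prime, `m ≥ 1`, and let `H, H'` be `ℚ_p`-rational
hyperplanes in `ℙ^{n-1}(ℂ_p)` with unimodular defining linear forms `a, b` (coefficients
in `ℚ_p` of sup-norm `1`) that are congruent modulo `p^{m+1}`.  Here `K` is a complete
ultrametric field extension of `ℚ_p` (such as `ℂ_p`) via an isometric embedding `ι`, and
`logp` is the Iwasawa `p`-adic logarithm, characterized on the unit ball around `1` by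
its power series.  For every `z` in the affinoid
`𝒳_p^{≤m} = {z : ord_p(ℓ_K(z)) ≤ m for all ℚ_p-rational K}` (with unimodular
coordinates), one has `ord_p((ℓ_{H'}(z) − ℓ_H(z))/ℓ_{H'}(z)) ≥ 1`, and
`log_p(ℓ_H(z)/ℓ_{H'}(z))` is given by the convergent power series in
`(ℓ_{H'}(z) − ℓ_H(z))/ℓ_{H'}(z)`; in particular `z ↦ log_p(ℓ_H(z)/ℓ_{H'}(z))` is a rigid
analytic function on `𝒳_p^{≤m}`. -/
theorem stmt_3
    (p : ℕ) [Fact p.Prime] (hodd : Odd p) (n m : ℕ) (hm : 1 ≤ m)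
    (K : Type*) [NontriviallyNormedField K] [CompleteSpace K] [IsUltrametricDist K]
    (ι : ℚ_[p] →+* K) (hι : ∀ x : ℚ_[p], ‖ι x‖ = ‖x‖)
    (logp : K → K)
    (hlog : ∀ x : K, ‖x‖ < 1 →
        HasSum (fun k : ℕ => (-1 : K) ^ k * x ^ (k + 1) / (k + 1 : ℕ)) (logp (1 + x)))
    (a b : Fin n → ℚ_[p])
    (ha₁ : ∀ i, ‖a i‖ ≤ 1) (ha₂ : ∃ i, ‖a i‖ = 1)      -- ℓ_H unimodular
    (hb₁ : ∀ i, ‖b i‖ ≤ 1) (hb₂ : ∃ i, ‖b i‖ = 1)      -- ℓ_{H'} unimodular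
    (hcong : ∀ i, ‖a i - b i‖ ≤ (p : ℝ) ^ (-(m + 1 : ℤ)))  -- ℓ_H ≡ ℓ_{H'} mod p^{m+1}
    (z : Fin n → K)
    (hz₁ : ∀ i, ‖z i‖ ≤ 1) (hz₂ : ∃ i, ‖z i‖ = 1)      -- z has unimodular coordinates
    (hzm : ∀ c : Fin n → ℚ_[p], (∀ i, ‖c i‖ ≤ 1) → (∃ i, ‖c i‖ = 1) →
        (p : ℝ) ^ (-(m : ℤ)) ≤ ‖∑ i, ι (c i) * z i‖) :  -- z ∈ 𝒳_p^{≤m}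
    ‖((∑ i, ι (b i) * z i) - ∑ i, ι (a i) * z i) / ∑ i, ι (b i) * z i‖ ≤ (p : ℝ)⁻¹ ∧
    HasSum
      (fun k : ℕ =>
        -((((∑ i, ι (b i) * z i) - ∑ i, ι (a i) * z i) / ∑ i, ι (b i) * z i) ^ (k + 1)
            / (k + 1 : ℕ)))
      (logp ((∑ i, ι (a i) * z i) / ∑ i, ι (b i) * z i)) :=
  stmt_3_general p n m K ι hι logp hlog a b hb₁ hb₂ hcong z hz₁ hzm
end

section
/- Let p be a prime, n ≥ 2, X = Z_p^n \ pZ_p^n, and let λ be a Z_p-valued measure on X with total mass zero, i.e. λ(X) = 0. Then for any z ∈ C_p^n whose coordinates do not all lie on a common Q_p-rational hyperplane (equivalently, z^t·x ≠ 0 for all nonzero x ∈ Q_p^n), the integral F(z) = ∫_X log_p(z^t·x) dλ(x) converges, and the value F(z) is unchanged when z is replaced by any nonzero C_p-scalar multiple of z. -/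
open Filter
open scoped BigOperators

lemma aux_unit_val {p : ℕ} [Fact p.Prime] {m : ℕ} (x : ZMod (p^(m+1))) (hx : IsUnit x) :
    ‖((x.val : ℤ_[p]))‖ = 1 := by
  have h1 : ((x.val : ℕ) : ZMod (p^(m+1))) = x := by
    rw [ZMod.natCast_val, ZMod.cast_id]
  rw [← h1] at hx
  have hcop : x.val.Coprime (p^(m+1)) := (ZMod.isUnit_iff_coprime _ _).mp hx
  have hnd : ¬ p ∣ x.val := by
    have : Nat.Coprime x.val p := Nat.Coprime.coprime_dvd_right (dvd_pow_self p (Nat.succ_ne_zero m)) hcop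
    exact (Nat.Prime.coprime_iff_not_dvd Fact.out).mp this.symm
  refine le_antisymm (PadicInt.norm_le_one _) ?_
  by_contra hlt
  push_neg at hlt
  have : ((x.val : ℤ) : ℤ_[p]) = ((x.val : ℕ) : ℤ_[p]) := by push_cast; ring
  rw [← this] at hlt
  have := (PadicInt.norm_int_lt_one_iff_dvd _).mp hlt
  exact hnd (Int.natCast_dvd_natCast.mp (by exact_mod_cast this))

lemma aux_cong {p : ℕ} [Fact p.Prime] {m : ℕ} (a b : ℕ) (h : a % p^m = b % p^m) :
    ‖((a : ℚ_[p]) - (b : ℚ_[p]))‖ ≤ (p : ℝ)^(-(m:ℤ)) := by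
  have hmod : (a : ℤ) % (p^m : ℤ) = (b : ℤ) % (p^m : ℤ) := by exact_mod_cast h
  have hd : ((p^m : ℤ)) ∣ ((b : ℤ) - (a : ℤ)) := Int.ModEq.dvd hmod
  have hd' : ((p^m : ℤ)) ∣ ((a : ℤ) - (b : ℤ)) := by have := dvd_neg.mpr hd; simpa using this
  have := (Padic.norm_int_le_pow_iff_dvd (p := p) ((a : ℤ) - (b : ℤ)) m).mpr hd'
  calc ‖((a : ℚ_[p]) - (b : ℚ_[p]))‖ = ‖(((a - b : ℤ)) : ℚ_[p])‖ := by push_cast; ring_nf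
    _ ≤ (p:ℝ)^(-(m:ℤ)) := this

/-- Let `λ` be a `ℤ_p`-valued measure of total mass zero on
`𝕏 = ℤ_p^n ∖ pℤ_p^n`, encoded by its values `lam r x = λ(x + p^{r+1}ℤ_p^n)` on basic
compact opens (a compatible family supported on primitive residue vectors, of total mass
zero).  For `z ∈ ℂ_p^n` (here: `z` with coordinates in a complete ultrametric extension
`K` of `ℚ_p`) not lying on any `ℚ_p`-rational hyperplane, the integral
`F(z) = ∫_𝕏 log_p(zᵗ·x) dλ(x)` converges as the limit of its Riemann sums
`f_r(z) = Σ_v λ(v + p^{r+1}ℤ_p^n) log_p(zᵗ·v)`, and the value is unchanged when `z` is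
replaced by any nonzero scalar multiple `c • z` (using `λ(𝕏) = 0` and
`log_p(c·w) = log_p c + log_p w`). -/
theorem stmt_4
    (p : ℕ) [Fact p.Prime] (n : ℕ) (hn : 2 ≤ n)
    (K : Type*) [NontriviallyNormedField K] [CompleteSpace K] [IsUltrametricDist K]
    (ι : ℚ_[p] →+* K) (hι : ∀ x : ℚ_[p], ‖ι x‖ = ‖x‖)
    (logp : K → K)
    (hlog_mul : ∀ x y : K, x ≠ 0 → y ≠ 0 → logp (x * y) = logp x + logp y)
    (hlog_bd : ∀ x : K, ‖x - 1‖ < 1 → ‖logp x‖ ≤ ‖x - 1‖)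
    -- the measure λ, via its values on the basic compact opens of level p^(r+1)
    (lam : ∀ r : ℕ, (Fin n → ZMod (p ^ (r + 1))) → ℤ_[p])
    (hcompat : ∀ (r : ℕ) (x : Fin n → ZMod (p ^ (r + 1))),
        lam r x = ∑ y : Fin n → ZMod (p ^ (r + 2)),
          if (fun i => ZMod.castHom (pow_dvd_pow p (Nat.le_succ (r + 1))) (ZMod (p ^ (r + 1))) (y i)) = x
          then lam (r + 1) y else 0)
    (hsupp : ∀ (r : ℕ) (x : Fin n → ZMod (p ^ (r + 1))),
        (∀ i, ¬ IsUnit (x i)) → lam r x = 0)            -- λ is supported on 𝕏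
    (hmass : ∑ x : Fin n → ZMod (p ^ 1), lam 0 x = 0)   -- λ has total mass zero
    (z : Fin n → K)
    (hz : ∀ c : Fin n → ℚ_[p], c ≠ 0 → ∑ i, ι (c i) * z i ≠ 0) :  -- z on no ℚ_p-hyperplane
    -- Riemann sums, with canonical integer representatives `ZMod.val`
    let f : ℕ → (Fin n → K) → K := fun r w =>
      ∑ x : Fin n → ZMod (p ^ (r + 1)),
        ι ((lam r x : ℤ_[p]) : ℚ_[p]) *
          logp (∑ i, ι ((ZMod.val (x i) : ℚ_[p])) * w i)
    ∃ Lval : K,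
      Tendsto (fun r => f r z) atTop (nhds Lval) ∧
      ∀ c : K, c ≠ 0 → Tendsto (fun r => f r (c • z)) atTop (nhds Lval) := by
  intro f
  -- projection maps
  set proj : ∀ r : ℕ, (Fin n → ZMod (p ^ (r+2))) → (Fin n → ZMod (p ^ (r+1))) :=
    fun r y i => ZMod.castHom (pow_dvd_pow p (Nat.le_succ (r+1))) (ZMod (p^(r+1))) (y i) with hproj
  -- the pairing at level r
  set S : ∀ r : ℕ, (Fin n → ZMod (p ^ (r+1))) → K :=
    fun r x => ∑ i, ι ((ZMod.val (x i) : ℚ_[p])) * z i with hS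
  -- total mass zero at every level
  have hmassr : ∀ r : ℕ, ∑ x : Fin n → ZMod (p ^ (r+1)), lam r x = 0 := by
    intro r
    induction r with
    | zero => exact hmass
    | succ r ih =>
      have key : ∑ x : Fin n → ZMod (p ^ (r+1)), lam r x
          = ∑ y : Fin n → ZMod (p ^ (r+2)), lam (r+1) y := by
        simp_rw [hcompat r]
        rw [Finset.sum_comm]
        refine Finset.sum_congr rfl fun y _ => ?_
        rw [Finset.sum_ite_eq]
        simp
      rw [← key] at *
      exact ih
  -- regrouping of Riemann sums
  have coesum : ∀ (m : ℕ) (g : (Fin n → ZMod (p ^ m)) → ℤ_[p]),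
      ((∑ y : Fin n → ZMod (p ^ m), g y : ℤ_[p]) : ℚ_[p]) = ∑ y : Fin n → ZMod (p ^ m), ((g y : ℚ_[p])) := by
    intro m g
    exact map_sum (PadicInt.Coe.ringHom) g Finset.univ
  have regroup : ∀ (r : ℕ) (G : (Fin n → ZMod (p ^ (r+1))) → K),
      ∑ x : Fin n → ZMod (p ^ (r+1)), ι ((lam r x : ℚ_[p])) * G x
        = ∑ y : Fin n → ZMod (p ^ (r+2)), ι ((lam (r+1) y : ℚ_[p])) * G (proj r y) := by
    intro r G
    have this1 : ∀ x : Fin n → ZMod (p ^ (r+1)),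
        ι ((lam r x : ℚ_[p])) * G x
        = ∑ y : Fin n → ZMod (p ^ (r+2)), (if proj r y = x then ι ((lam (r+1) y : ℚ_[p])) * G x else 0) := by
      intro x
      rw [hcompat r x, coesum, map_sum, Finset.sum_mul]
      refine Finset.sum_congr rfl fun y _ => ?_
      by_cases h : proj r y = x
      · simp only [hproj] at h ⊢
        rw [if_pos h, if_pos h]
      · simp only [hproj] at h ⊢
        rw [if_neg h, if_neg h]
        simp
    rw [Finset.sum_congr rfl (fun x _ => this1 x), Finset.sum_comm]
    refine Finset.sum_congr rfl fun y _ => ?_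
    rw [Finset.sum_ite_eq]
    simp
  -- continuity of the pairing on Z_p^n
  have hιcont : Continuous ι := (AddMonoidHomClass.isometry_of_norm ι hι).continuous
  have hcoecont : Continuous (fun a : ℤ_[p] => (a : ℚ_[p])) := continuous_subtype_val
  set T : (Fin n → ℤ_[p]) → K := fun a => ∑ i, ι ((a i : ℚ_[p])) * z i with hT
  have hTcont : Continuous T := by
    apply continuous_finset_sum
    intro i _
    exact ((hιcont.comp hcoecont).comp (continuous_apply i)).mul continuous_const
  -- the compact set X of primitive vectors
  set X : Set (Fin n → ℤ_[p]) := {a | ∃ i, ‖a i‖ = 1} with hX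
  have hXclosed : IsClosed X := by
    have : X = ⋃ i : Fin n, {a : Fin n → ℤ_[p] | ‖a i‖ = 1} := by
      ext a; simp [hX]
    rw [this]
    exact isClosed_iUnion_of_finite fun i =>
      IsClosed.preimage ((continuous_apply i).norm) isClosed_singleton
  have hXcompact : IsCompact X := hXclosed.isCompact
  have hXne : X.Nonempty := ⟨fun _ => 1, ⟨⟨0, by omega⟩, by simp⟩⟩
  have hTne : ∀ a ∈ X, T a ≠ 0 := by
    intro a ha
    have hane : (fun i => (a i : ℚ_[p])) ≠ 0 := by
      obtain ⟨i, hi⟩ := ha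
      intro hcontra
      have := congrFun hcontra i
      simp only [Pi.zero_apply] at this
      have h0 : a i = 0 := by rwa [PadicInt.coe_eq_zero] at this
      rw [h0] at hi
      simp at hi
    exact hz _ hane
  obtain ⟨a0, ha0X, ha0min⟩ := hXcompact.exists_isMinOn hXne (hTcont.norm.continuousOn)
  set δ : ℝ := ‖T a0‖ with hδ
  have hδpos : 0 < δ := norm_pos_iff.mpr (hTne a0 ha0X)
  have hlbX : ∀ a ∈ X, δ ≤ ‖T a‖ := fun a ha => ha0min ha
  -- S agrees with T on canonical lifts
  have hST : ∀ (r : ℕ) (x : Fin n → ZMod (p ^ (r+1))), S r x = T (fun i => ((x i).val : ℤ_[p])) := by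
    intro r x
    simp only [hS, hT]
    refine Finset.sum_congr rfl fun i _ => ?_
    norm_cast
  have hSlb : ∀ (r : ℕ) (x : Fin n → ZMod (p ^ (r+1))), (∃ i, IsUnit (x i)) → δ ≤ ‖S r x‖ := by
    rintro r x ⟨i, hi⟩
    rw [hST]
    exact hlbX _ ⟨i, aux_unit_val (x i) hi⟩
  have hSne : ∀ (r : ℕ) (x : Fin n → ZMod (p ^ (r+1))), (∃ i, IsUnit (x i)) → S r x ≠ 0 := by
    intro r x h h0
    have := hSlb r x h
    rw [h0, norm_zero] at this
    linarith
  -- bound on the coordinates of z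
  set M : ℝ := (∑ i, ‖z i‖) + 1 with hM
  have hMpos : 0 < M := by positivity
  have hzM : ∀ i, ‖z i‖ ≤ M := fun i => by
    have : ‖z i‖ ≤ ∑ j, ‖z j‖ :=
      Finset.single_le_sum (fun j _ => norm_nonneg _) (Finset.mem_univ i)
    simp only [hM]; linarith
  -- congruence of canonical lifts
  have hval : ∀ (r : ℕ) (y : Fin n → ZMod (p ^ (r+2))) (i : Fin n),
      (proj r y i).val = (y i).val % p^(r+1) := by
    intro r y i
    simp only [hproj]
    rw [ZMod.castHom_apply, ← ZMod.natCast_val, ZMod.val_natCast]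
  -- difference bound between consecutive Riemann points
  have hdiff : ∀ (r : ℕ) (y : Fin n → ZMod (p ^ (r+2))),
      ‖S (r+1) y - S r (proj r y)‖ ≤ (p:ℝ)^(-(r+1:ℤ)) * (n * M) := by
    intro r y
    have h1 : S (r+1) y - S r (proj r y)
        = ∑ i, (ι ((ZMod.val (y i) : ℚ_[p])) - ι ((ZMod.val (proj r y i) : ℚ_[p]))) * z i := by
      simp only [hS, ← Finset.sum_sub_distrib]
      exact Finset.sum_congr rfl fun i _ => (sub_mul _ _ _).symm
    rw [h1]
    refine (norm_sum_le _ _).trans ?_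
    have h2 : ∀ i : Fin n,
        ‖(ι ((ZMod.val (y i) : ℚ_[p])) - ι ((ZMod.val (proj r y i) : ℚ_[p]))) * z i‖
          ≤ (p:ℝ)^(-(r+1:ℤ)) * M := by
      intro i
      rw [norm_mul, ← map_sub, hι]
      have hc : ‖((ZMod.val (y i) : ℚ_[p]) - (ZMod.val (proj r y i) : ℚ_[p]))‖
          ≤ (p:ℝ)^(-((r+1:ℕ)):ℤ) := by
        apply aux_cong
        rw [hval r y i, Nat.mod_mod_of_dvd _ dvd_rfl]
      have := mul_le_mul hc (hzM i) (norm_nonneg _) (by positivity)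
      exact this.trans (by push_cast; ring_nf; exact le_refl _)
    refine (Finset.sum_le_sum fun i _ => h2 i).trans ?_
    rw [Finset.sum_const, Finset.card_univ, Fintype.card_fin, nsmul_eq_mul]
    ring_nf
    exact le_refl _
  -- norm of measure values is at most 1
  have hlam_le : ∀ (r : ℕ) (x : Fin n → ZMod (p ^ (r+1))), ‖ι ((lam r x : ℚ_[p]))‖ ≤ 1 := by
    intro r x
    rw [hι, PadicInt.padic_norm_e_of_padicInt]
    exact PadicInt.norm_le_one _
  -- the error sequence
  set ε : ℕ → ℝ := fun r => (p:ℝ)^(-(r+1:ℤ)) * (n * M) / δ with hε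
  have hεnonneg : ∀ r, 0 ≤ ε r := by
    intro r
    have : (0:ℝ) < p := by exact_mod_cast (Fact.out : p.Prime).pos
    positivity
  have hεeq : ∀ r : ℕ, ε r = ((n * M) / (δ * p)) * ((1:ℝ)/p)^r := by
    intro r
    have hp0 : (0:ℝ) < p := by exact_mod_cast (Fact.out : p.Prime).pos
    simp only [hε]
    rw [zpow_neg, zpow_add₀ (ne_of_gt hp0), zpow_natCast, zpow_one, one_div, inv_pow]
    rw [mul_inv]
    field_simp
  have hεto0 : Tendsto ε atTop (nhds 0) := by
    have hp1 : (1:ℝ) < p := by exact_mod_cast (Fact.out : p.Prime).one_lt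
    have h1p : |(1:ℝ)/p| < 1 := by
      rw [abs_of_pos (by positivity)]
      rw [div_lt_one (by linarith)]
      linarith
    have := (tendsto_pow_atTop_nhds_zero_of_abs_lt_one h1p).const_mul ((n * M) / (δ * p))
    rw [mul_zero] at this
    exact Tendsto.congr (fun r => (hεeq r).symm) this
  -- the key step bound
  have hfz : ∀ r, f r z = ∑ x : Fin n → ZMod (p ^ (r+1)), ι ((lam r x : ℚ_[p])) * logp (S r x) :=
    fun r => rfl
  have hstep : ∀ r : ℕ, ε r < 1 → ‖f (r+1) z - f r z‖ ≤ ε r := by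
    intro r hr1
    have h1 : f (r+1) z - f r z
        = ∑ y : Fin n → ZMod (p ^ (r+2)),
            ι ((lam (r+1) y : ℚ_[p])) * (logp (S (r+1) y) - logp (S r (proj r y))) := by
      rw [hfz, hfz, regroup r (fun x => logp (S r x)), ← Finset.sum_sub_distrib]
      exact Finset.sum_congr rfl fun y _ => by ring
    rw [h1]
    refine IsUltrametricDist.norm_sum_le_of_forall_le_of_nonneg (hεnonneg r) fun y _ => ?_
    by_cases hprim : ∃ i, IsUnit (y i)
    · have hprim' : ∃ i, IsUnit (proj r y i) := by
        obtain ⟨i, hi⟩ := hprim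
        exact ⟨i, by simpa only [hproj] using hi.map (ZMod.castHom (pow_dvd_pow p (Nat.le_succ (r+1))) (ZMod (p^(r+1))))⟩
      have hy0 : S (r+1) y ≠ 0 := hSne _ _ hprim
      have hx0 : S r (proj r y) ≠ 0 := hSne _ _ hprim'
      have hratio : logp (S (r+1) y) - logp (S r (proj r y))
          = logp (S (r+1) y / S r (proj r y)) := by
        have h2 : S r (proj r y) * (S (r+1) y / S r (proj r y)) = S (r+1) y := by
          field_simp
        have h3 := hlog_mul (S r (proj r y)) (S (r+1) y / S r (proj r y)) hx0 (div_ne_zero hy0 hx0)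
        rw [h2] at h3
        rw [h3]
        ring
      have hrb : ‖S (r+1) y / S r (proj r y) - 1‖ ≤ ε r := by
        rw [div_sub_one hx0, norm_div]
        rw [hε]
        exact div_le_div₀ (by positivity) (hdiff r y) hδpos (hSlb _ _ hprim')
      have hlb : ‖logp (S (r+1) y / S r (proj r y))‖ ≤ ε r :=
        (hlog_bd _ (lt_of_le_of_lt hrb hr1)).trans hrb
      rw [hratio, norm_mul]
      calc ‖ι ((lam (r+1) y : ℚ_[p]))‖ * ‖logp (S (r+1) y / S r (proj r y))‖
          ≤ 1 * ε r := mul_le_mul (hlam_le _ _) hlb (norm_nonneg _) zero_le_one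
        _ = ε r := one_mul _
    · push_neg at hprim
      rw [hsupp (r+1) y hprim]
      simpa using hεnonneg r
  -- eventually ε < 1
  obtain ⟨r0, hr0⟩ := (eventually_atTop).mp (hεto0.eventually_lt_const one_pos)
  -- Cauchy sequence
  have hcauchy : CauchySeq (fun k => f (k + r0) z) := by
    apply cauchySeq_of_dist_le_of_summable (d := fun k => ε (k + r0))
    · intro k
      rw [dist_eq_norm, norm_sub_rev]
      have : k + 1 + r0 = (k + r0) + 1 := by omega
      rw [this]
      exact hstep (k + r0) (hr0 _ (by omega))
    · have hp1 : (1:ℝ) < p := by exact_mod_cast (Fact.out : p.Prime).one_lt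
      have h1p : |(1:ℝ)/p| < 1 := by
        rw [abs_of_pos (by positivity), div_lt_one (by linarith)]
        linarith
      have hs : Summable (fun k : ℕ => ((n*M)/(δ*p) * ((1:ℝ)/p)^r0) * ((1:ℝ)/p)^k) :=
        (summable_geometric_of_abs_lt_one h1p).mul_left _
      refine hs.congr fun k => ?_
      rw [hεeq, pow_add]
      ring
  obtain ⟨L, hL⟩ := cauchySeq_tendsto_of_complete hcauchy
  have hLz : Tendsto (fun r => f r z) atTop (nhds L) :=
    (tendsto_add_atTop_iff_nat r0).mp hL
  -- scaling invariance: f r (c • z) = f r z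
  have hscale : ∀ (r : ℕ) (c : K), c ≠ 0 → f r (c • z) = f r z := by
    intro r c hc
    have hfc : f r (c • z) = ∑ x : Fin n → ZMod (p ^ (r+1)),
        ι ((lam r x : ℚ_[p])) * logp (c * S r x) := by
      refine Finset.sum_congr rfl fun x _ => ?_
      congr 1
      congr 1
      rw [hS, Finset.mul_sum]
      refine Finset.sum_congr rfl fun i _ => ?_
      simp only [Pi.smul_apply, smul_eq_mul]
      ring
    rw [hfc, hfz]
    have hterm : ∀ x : Fin n → ZMod (p ^ (r+1)),
        ι ((lam r x : ℚ_[p])) * logp (c * S r x)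
          = ι ((lam r x : ℚ_[p])) * logp c + ι ((lam r x : ℚ_[p])) * logp (S r x) := by
      intro x
      by_cases hprim : ∃ i, IsUnit (x i)
      · rw [hlog_mul c (S r x) hc (hSne _ _ hprim)]
        ring
      · push_neg at hprim
        rw [hsupp r x hprim]
        simp
    rw [Finset.sum_congr rfl (fun x _ => hterm x), Finset.sum_add_distrib]
    have hz0 : ∑ x : Fin n → ZMod (p ^ (r+1)), ι ((lam r x : ℚ_[p])) * logp c = 0 := by
      rw [← Finset.sum_mul, ← map_sum, ← coesum, hmassr r]
      simp
    rw [hz0, zero_add]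
  refine ⟨L, hLz, fun c hc => ?_⟩
  exact Tendsto.congr (fun r => (hscale r c hc).symm) hLz
end

section
/- With notation as above, let λ be a Z_p-valued measure of total mass zero on X = Z_p^n \ pZ_p^n, and for each r ≥ 1 fix a set V_r of integer-vector representatives of X_r = (Z/p^r)^n \ (p Z/p^r)^n. Define f_r(z) = Σ_{v ∈ V_r} λ(v + p^r Z_p^n) log_p(z^t·v). Then for every m ≥ 1 and all z in the affinoid X_p^{≤m}, and all r > m, one has ord_p(f_{r+1}(z) − f_r(z)) ≥ r − m; in particular the sequence (f_r) restricted to X_p^{≤m} is uniformly Cauchy and converges uniformly to F(z) = ∫_X log_p(z^t·x) dλ. -/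
open Filter
open scoped BigOperators

/-- If `a : ℤ_[p]` reduces to a unit mod `p^(k+1)`, then `‖a‖ = 1`. -/
lemma aux_norm_one_of_unit_red {p : ℕ} [hp : Fact p.Prime] {k : ℕ} {a : ℤ_[p]}
    (hu : IsUnit (PadicInt.toZModPow (k + 1) a)) : ‖a‖ = 1 := by
  rw [← PadicInt.isUnit_iff]
  by_contra hna
  have hlt : ‖a‖ < 1 :=
    lt_of_le_of_ne (PadicInt.norm_le_one a) (fun h1 => hna (PadicInt.isUnit_iff.mpr h1))
  obtain ⟨t, rfl⟩ := (PadicInt.norm_lt_one_iff_dvd a).mp hlt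
  rw [map_mul] at hu
  have hpu : IsUnit ((p : ZMod (p ^ (k + 1)))) := by
    have h2 := isUnit_of_mul_isUnit_left hu
    simpa using h2
  haveI : NeZero (p ^ (k + 1)) := ⟨pow_ne_zero _ hp.out.ne_zero⟩
  have hcop : Nat.Coprime p (p ^ (k + 1)) := by
    have h3 := (ZMod.isUnit_iff_coprime p (p ^ (k + 1))).mp (by exact_mod_cast hpu)
    exact h3
  have hdvd : p ∣ Nat.gcd p (p ^ (k + 1)) :=
    Nat.dvd_gcd dvd_rfl (dvd_pow_self p (Nat.succ_ne_zero k))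
  rw [Nat.Coprime] at hcop
  rw [hcop] at hdvd
  exact hp.out.ne_one (Nat.dvd_one.mp hdvd)

/-- With notation as in Statement 4, let `λ` be a `ℤ_p`-valued measure of
total mass zero on `𝕏 = ℤ_p^n ∖ pℤ_p^n`, and for each `r` fix a set of representatives
of `(ℤ/p^{r+1})^n` in `ℤ_p^n` (a section `sec` of reduction).  Define
`f_r(z) = Σ_x λ(x + p^{r+1}ℤ_p^n) log_p(zᵗ·sec_r(x))`.  Then for every `m ≥ 1` and every
`z` in the affinoid `𝒳_p^{≤m}` (with unimodular coordinates), and every `r` with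
`m < r + 1`, one has `ord_p(f_{r+1}(z) − f_r(z)) ≥ (r+1) − m`, i.e.
`‖f_{r+1}(z) − f_r(z)‖ ≤ p^{-((r+1)-m)}`; in particular the sequence `(f_r)` is uniformly
Cauchy on `𝒳_p^{≤m}` and converges uniformly there to the integral
`F(z) = ∫_𝕏 log_p(zᵗ·x) dλ`. -/
theorem stmt_5
    (p : ℕ) [Fact p.Prime] (n : ℕ) (hn : 2 ≤ n) (m : ℕ) (hm : 1 ≤ m)
    (K : Type*) [NontriviallyNormedField K] [CompleteSpace K] [IsUltrametricDist K]
    (ι : ℚ_[p] →+* K) (hι : ∀ x : ℚ_[p], ‖ι x‖ = ‖x‖)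
    (logp : K → K)
    (hlog_mul : ∀ x y : K, x ≠ 0 → y ≠ 0 → logp (x * y) = logp x + logp y)
    (hlog_bd : ∀ x : K, ‖x - 1‖ < 1 → ‖logp x‖ ≤ ‖x - 1‖)
    (lam : ∀ r : ℕ, (Fin n → ZMod (p ^ (r + 1))) → ℤ_[p])
    (hcompat : ∀ (r : ℕ) (x : Fin n → ZMod (p ^ (r + 1))),
        lam r x = ∑ y : Fin n → ZMod (p ^ (r + 2)),
          if (fun i => ZMod.castHom (pow_dvd_pow p (Nat.le_succ (r + 1)))
                (ZMod (p ^ (r + 1))) (y i)) = x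
          then lam (r + 1) y else 0)
    (hsupp : ∀ (r : ℕ) (x : Fin n → ZMod (p ^ (r + 1))),
        (∀ i, ¬ IsUnit (x i)) → lam r x = 0)
    (hmass : ∑ x : Fin n → ZMod (p ^ 1), lam 0 x = 0)
    -- a choice of integer-vector representatives V_r
    (sec : ∀ r : ℕ, (Fin n → ZMod (p ^ (r + 1))) → (Fin n → ℤ_[p]))
    (hsec : ∀ r x i, PadicInt.toZModPow (r + 1) (sec r x i) = x i) :
    let f : ℕ → (Fin n → K) → K := fun r w =>
      ∑ x : Fin n → ZMod (p ^ (r + 1)),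
        ι ((lam r x : ℤ_[p]) : ℚ_[p]) * logp (∑ i, ι ((sec r x i : ℤ_[p]) : ℚ_[p]) * w i)
    let Aff : Set (Fin n → K) := {w |
      (∀ i, ‖w i‖ ≤ 1) ∧ (∃ i, ‖w i‖ = 1) ∧
      ∀ c : Fin n → ℚ_[p], (∀ i, ‖c i‖ ≤ 1) → (∃ i, ‖c i‖ = 1) →
        (p : ℝ) ^ (-(m : ℤ)) ≤ ‖∑ i, ι (c i) * w i‖}
    -- the uniform estimate ord_p(f_{r+1} − f_r) ≥ (r+1) − m on the affinoid 𝒳_p^{≤m}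
    (∀ z ∈ Aff, ∀ r : ℕ, m < r + 1 →
        ‖f (r + 1) z - f r z‖ ≤ (p : ℝ) ^ (-(((r : ℤ) + 1) - (m : ℤ)))) ∧
    -- uniform Cauchyness and uniform convergence to the integral F
    (∀ z ∈ Aff, CauchySeq fun r => f r z) ∧
    ∃ F : (Fin n → K) → K, TendstoUniformlyOn (fun r w => f r w) F atTop Aff := by
  intro f Aff
  have hpp : p.Prime := Fact.out
  have hp1 : (1 : ℝ) < p := by exact_mod_cast hpp.one_lt
  have hp0 : (0 : ℝ) < p := lt_trans one_pos hp1
  set Φ : ℤ_[p] →+* K := ι.comp (PadicInt.Coe.ringHom) with hΦ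
  have hΦι : ∀ a : ℤ_[p], ι ((a : ℚ_[p])) = Φ a := fun a => rfl
  have hΦnorm : ∀ a : ℤ_[p], ‖Φ a‖ = ‖a‖ := fun a => by
    rw [← hΦι, hι, ← PadicInt.norm_def]
  have hf : ∀ (r : ℕ) (w : Fin n → K), f r w =
      ∑ x : Fin n → ZMod (p ^ (r + 1)),
        Φ (lam r x) * logp (∑ i, Φ (sec r x i) * w i) := fun r w => rfl
  -- the key estimate
  have key : ∀ z ∈ Aff, ∀ r : ℕ, m < r + 1 →
      ‖f (r + 1) z - f r z‖ ≤ (p : ℝ) ^ (-(((r : ℤ) + 1) - (m : ℤ))) := by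
    rintro z ⟨hz1, hz2, hz3⟩ r hr
    have hC0 : (0 : ℝ) < (p : ℝ) ^ (-(((r : ℤ) + 1) - (m : ℤ))) := by positivity
    set π : (Fin n → ZMod (p ^ (r + 2))) → (Fin n → ZMod (p ^ (r + 1))) :=
      fun y i => ZMod.castHom (pow_dvd_pow p (Nat.le_succ (r + 1)))
        (ZMod (p ^ (r + 1))) (y i) with hπ
    have hcompat' : ∀ x : Fin n → ZMod (p ^ (r + 1)),
        lam r x = ∑ y : Fin n → ZMod (p ^ (r + 2)),
          if π y = x then lam (r + 1) y else 0 := fun x => hcompat r x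
    -- rewrite f r z as a sum over level r+2 classes
    have hfr : f r z = ∑ y : Fin n → ZMod (p ^ (r + 2)),
        Φ (lam (r + 1) y) * logp (∑ i, Φ (sec r (π y) i) * z i) := by
      rw [hf]
      calc (∑ x : Fin n → ZMod (p ^ (r + 1)),
              Φ (lam r x) * logp (∑ i, Φ (sec r x i) * z i))
          = ∑ x : Fin n → ZMod (p ^ (r + 1)),
              ∑ y : Fin n → ZMod (p ^ (r + 2)),
                (if π y = x then Φ (lam (r + 1) y) * logp (∑ i, Φ (sec r x i) * z i)
                 else 0) := by
            refine Finset.sum_congr rfl fun x _ => ?_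
            rw [hcompat' x, map_sum, Finset.sum_mul]
            refine Finset.sum_congr rfl fun y _ => ?_
            rw [apply_ite Φ, map_zero, ite_mul, zero_mul]
        _ = ∑ y : Fin n → ZMod (p ^ (r + 2)),
              ∑ x : Fin n → ZMod (p ^ (r + 1)),
                (if π y = x then Φ (lam (r + 1) y) * logp (∑ i, Φ (sec r x i) * z i)
                 else 0) := Finset.sum_comm
        _ = _ := by
            refine Finset.sum_congr rfl fun y _ => ?_
            rw [Finset.sum_ite_eq]
            simp
    have hfr1 : f (r + 1) z = ∑ y : Fin n → ZMod (p ^ (r + 2)),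
        Φ (lam (r + 1) y) * logp (∑ i, Φ (sec (r + 1) y i) * z i) := hf (r + 1) z
    rw [hfr1, hfr, ← Finset.sum_sub_distrib]
    have hterm : ∀ y : Fin n → ZMod (p ^ (r + 2)),
        ‖Φ (lam (r + 1) y) * logp (∑ i, Φ (sec (r + 1) y i) * z i) -
          Φ (lam (r + 1) y) * logp (∑ i, Φ (sec r (π y) i) * z i)‖ ≤
          (p : ℝ) ^ (-(((r : ℤ) + 1) - (m : ℤ))) := by
      intro y
      by_cases hy : ∀ i, ¬ IsUnit (y i)
      · rw [hsupp (r + 1) y hy]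
        simp only [map_zero, zero_mul, sub_zero, norm_zero]
        exact hC0.le
      · push_neg at hy
        obtain ⟨i0, hi0⟩ := hy
        set x : Fin n → ZMod (p ^ (r + 1)) := π y with hx
        set Bv : K := ∑ i, Φ (sec r x i) * z i with hBv
        set Av : K := ∑ i, Φ (sec (r + 1) y i) * z i with hAv
        -- unimodularity of sec r x
        have hxunit : IsUnit (x i0) := hi0.map _
        have hBnorm : (p : ℝ) ^ (-(m : ℤ)) ≤ ‖Bv‖ := by
          have h1 : ∀ i, ‖((sec r x i : ℤ_[p]) : ℚ_[p])‖ ≤ 1 := fun i => by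
            rw [← PadicInt.norm_def]; exact PadicInt.norm_le_one _
          have h2 : ∃ i, ‖((sec r x i : ℤ_[p]) : ℚ_[p])‖ = 1 := by
            refine ⟨i0, ?_⟩
            rw [← PadicInt.norm_def]
            exact aux_norm_one_of_unit_red (by rw [hsec r x i0]; exact hxunit)
          exact hz3 (fun i => ((sec r x i : ℤ_[p]) : ℚ_[p])) h1 h2
        have hBpos : (0 : ℝ) < ‖Bv‖ := lt_of_lt_of_le (by positivity) hBnorm
        have hBne : Bv ≠ 0 := fun h => by rw [h, norm_zero] at hBpos; exact lt_irrefl 0 hBpos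
        -- the congruence estimate
        have hsecdiff : ∀ i, ‖sec (r + 1) y i - sec r x i‖ ≤ (p : ℝ) ^ (-((r + 1 : ℕ) : ℤ)) := by
          intro i
          rw [PadicInt.norm_le_pow_iff_mem_span_pow, ← PadicInt.ker_toZModPow, RingHom.mem_ker,
            map_sub, hsec r x i]
          have h3 : PadicInt.toZModPow (r + 1) (sec (r + 1) y i) = x i := by
            rw [← PadicInt.cast_toZModPow (r + 1) (r + 2) (Nat.le_succ _), hsec (r + 1) y i]
            rfl
          rw [h3, sub_self]
        have hD : ‖Av - Bv‖ ≤ (p : ℝ) ^ (-((r + 1 : ℕ) : ℤ)) := by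
          have h4 : Av - Bv = ∑ i, Φ (sec (r + 1) y i - sec r x i) * z i := by
            rw [hAv, hBv, ← Finset.sum_sub_distrib]
            exact Finset.sum_congr rfl fun i _ => by rw [map_sub, sub_mul]
          rw [h4]
          refine IsUltrametricDist.norm_sum_le_of_forall_le_of_nonneg (by positivity)
            fun i _ => ?_
          calc ‖Φ (sec (r + 1) y i - sec r x i) * z i‖
              ≤ ‖Φ (sec (r + 1) y i - sec r x i)‖ * ‖z i‖ := norm_mul_le _ _
            _ ≤ (p : ℝ) ^ (-((r + 1 : ℕ) : ℤ)) * 1 := by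
                refine mul_le_mul ?_ (hz1 i) (norm_nonneg _) (by positivity)
                rw [hΦnorm]; exact hsecdiff i
            _ = _ := mul_one _
        -- u = Av / Bv is close to 1
        set u : K := Av / Bv with hu
        have hu1 : ‖u - 1‖ ≤ (p : ℝ) ^ (-(((r : ℤ) + 1) - (m : ℤ))) := by
          rw [hu, div_sub_one hBne, norm_div]
          calc ‖Av - Bv‖ / ‖Bv‖
              ≤ (p : ℝ) ^ (-((r + 1 : ℕ) : ℤ)) / (p : ℝ) ^ (-(m : ℤ)) :=
                div_le_div₀ (by positivity) hD (by positivity) hBnorm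
            _ = (p : ℝ) ^ (-(((r : ℤ) + 1) - (m : ℤ))) := by
                rw [← zpow_sub₀ (ne_of_gt hp0)]
                congr 1
                push_cast
                ring
        have hlt1 : ‖u - 1‖ < 1 := by
          refine lt_of_le_of_lt hu1 ?_
          calc (p : ℝ) ^ (-(((r : ℤ) + 1) - (m : ℤ))) < (p : ℝ) ^ (0 : ℤ) := by
                refine zpow_lt_zpow_right₀ hp1 ?_
                omega
            _ = 1 := zpow_zero _
        have hune : u ≠ 0 := by
          intro h
          rw [h, zero_sub, norm_neg, norm_one] at hlt1
          exact lt_irrefl 1 hlt1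
        have hAeq : Av = Bv * u := by
          rw [hu, mul_div_cancel₀ _ hBne]
        have hlogdiff : logp Av - logp Bv = logp u := by
          rw [hAeq, hlog_mul Bv u hBne hune]
          ring
        calc ‖Φ (lam (r + 1) y) * logp Av - Φ (lam (r + 1) y) * logp Bv‖
            = ‖Φ (lam (r + 1) y) * (logp Av - logp Bv)‖ := by ring_nf
          _ ≤ ‖Φ (lam (r + 1) y)‖ * ‖logp Av - logp Bv‖ := norm_mul_le _ _
          _ ≤ 1 * (p : ℝ) ^ (-(((r : ℤ) + 1) - (m : ℤ))) := by
              refine mul_le_mul ?_ ?_ (norm_nonneg _) one_pos.le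
              · rw [hΦnorm]; exact PadicInt.norm_le_one _
              · rw [hlogdiff]
                exact le_trans (hlog_bd u hlt1) hu1
          _ = _ := one_mul _
    refine IsUltrametricDist.norm_sum_le_of_forall_le_of_nonneg hC0.le fun y _ => ?_
    simpa only [mul_sub] using hterm y
  -- telescoping estimate
  have tele : ∀ z ∈ Aff, ∀ s : ℕ, m ≤ s → ∀ t : ℕ, s ≤ t →
      ‖f t z - f s z‖ ≤ (p : ℝ) ^ (-(((s : ℤ) + 1) - (m : ℤ))) := by
    intro z hz s hs t ht
    induction t, ht using Nat.le_induction with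
    | base => simp; positivity
    | succ t ht IH =>
        have h1 : f (t + 1) z - f s z = (f (t + 1) z - f t z) + (f t z - f s z) := by ring
        rw [h1]
        refine le_trans (IsUltrametricDist.norm_add_le_max _ _) (max_le ?_ IH)
        refine le_trans (key z hz t (by omega)) ?_
        refine zpow_le_zpow_right₀ hp1.le ?_
        omega
  refine ⟨key, ?_, ?_⟩
  · -- Cauchyness
    intro z hz
    rw [Metric.cauchySeq_iff']
    intro ε hε
    obtain ⟨k, hk⟩ := PadicInt.exists_pow_neg_lt p hε
    refine ⟨m + k, fun j hj => ?_⟩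
    rw [dist_eq_norm]
    calc ‖f j z - f (m + k) z‖
        ≤ (p : ℝ) ^ (-((((m + k : ℕ) : ℤ) + 1) - (m : ℤ))) :=
          tele z hz (m + k) (Nat.le_add_right _ _) j hj
      _ ≤ (p : ℝ) ^ (-(k : ℤ)) := zpow_le_zpow_right₀ hp1.le (by push_cast; omega)
      _ < ε := hk
  · -- uniform convergence
    have hUC : UniformCauchySeqOn (fun r w => f r w) atTop Aff := by
      rw [Metric.uniformCauchySeqOn_iff]
      intro ε hε
      obtain ⟨k, hk⟩ := PadicInt.exists_pow_neg_lt p hε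
      refine ⟨m + k, fun a ha b hb z hz => ?_⟩
      have hbound : ∀ s t : ℕ, m + k ≤ s → s ≤ t → dist (f t z) (f s z) < ε := by
        intro s t hs hst
        rw [dist_eq_norm]
        calc ‖f t z - f s z‖
            ≤ (p : ℝ) ^ (-(((s : ℤ) + 1) - (m : ℤ))) := tele z hz s (by omega) t hst
          _ ≤ (p : ℝ) ^ (-(k : ℤ)) := by
              refine zpow_le_zpow_right₀ hp1.le ?_
              have : (m : ℤ) + k ≤ s := by exact_mod_cast hs
              omega
          _ < ε := hk
      rcases le_total a b with h | h
      · rw [dist_comm]; exact hbound a b ha h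
      · exact hbound b a hb h
    have cauchy : ∀ z ∈ Aff, CauchySeq fun r => f r z := by
      intro z hz
      exact hUC.cauchySeq hz
    have hlim : ∀ z : Fin n → K, ∃ L : K, z ∈ Aff → Tendsto (fun r => f r z) atTop (nhds L) := by
      intro z
      by_cases hz : z ∈ Aff
      · obtain ⟨L, hL⟩ := cauchySeq_tendsto_of_complete (cauchy z hz)
        exact ⟨L, fun _ => hL⟩
      · exact ⟨0, fun h => absurd h hz⟩
    choose F hF using hlim
    exact ⟨F, hUC.tendstoUniformlyOn_of_tendsto (fun z hz => hF z hz)⟩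
end

section
/- Let F be a totally real field of degree n with group of totally positive units U_F, let a be a fractional ideal of F, and let r ≥ 1. Then the map sending the U_F-orbit of a class [λ] ∈ (a^{-1} \ p a^{-1})/p^r a^{-1}, where λ is chosen totally positive in its class, to the class of the integral ideal a·(λ) in the narrow ray class group G_{p^r} of conductor p^r, is a well-defined injection whose image is exactly the set of classes in G_{p^r} mapping to the class of a in the narrow class group G_1. -/
/-!
Multiplying the congruence `λ - u λ' ≡ 0 mod p^r a⁻¹` by the unit `u⁻¹` turns it into
`μ λ' ≡ λ' mod p^r a⁻¹` with `μ = u⁻¹ λ / λ'` totally positive, and conversely `ε = μ λ' / λ`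
is a totally positive unit; this identifies the unit orbits with the narrow ray classes.
Since `a` is invertible, `a (λ)` is integral iff `λ ∈ a⁻¹`, and since `(p)` is maximal,
`a (λ)` is coprime to `p` iff `a (λ) ⊄ (p)`, i.e. iff `λ ∉ p a⁻¹`: so the image is the
fibre over `[a]`.
-/

open NumberField
open scoped nonZeroDivisors

def totallyPositive (K : Type*) [Field K] : Submonoid K where
  carrier := {x | ∀ φ : K →+* ℝ, 0 < φ x}
  mul_mem' hx hy φ := by simpa only [map_mul] using mul_pos (hx φ) (hy φ)
  one_mem' φ := by simp

section TotallyPositive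

variable {K : Type*} [Field K]

theorem inv_mem_totallyPositive {x : K} (hx : x ∈ totallyPositive K) :
    x⁻¹ ∈ totallyPositive K := fun φ => by
  simpa only [map_inv₀] using inv_pos.mpr (hx φ)

variable {R : Type*} [CommRing R] [Algebra R K]

theorem exists_unit_sub_mul_mem_iff_exists_totallyPositive {M : Submodule R K} (c : K)
    {x y : K} (hx : x ∈ totallyPositive K) (hy : y ∈ totallyPositive K) (hx0 : x ≠ 0)
    (hy0 : y ≠ 0) :
    (∃ u : Rˣ, algebraMap R K u ∈ totallyPositive K ∧
        ∃ w ∈ M, x - algebraMap R K u * y = c * w) ↔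
      ∃ μ : K, μ ∈ totallyPositive K ∧ (∃ ε : Rˣ, μ * y = algebraMap R K ε * x) ∧
        ∃ w ∈ M, μ * y - y = c * w := by
  have hM : ∀ (r : R), ∀ w ∈ M, algebraMap R K r * w ∈ M := fun r w hw => by
    simpa only [Algebra.smul_def] using M.smul_mem r hw
  have hunit : ∀ u : Rˣ, algebraMap R K u ≠ 0 := fun u => (u.isUnit.map _).ne_zero
  constructor
  · rintro ⟨u, hu, w, hw, hxy⟩
    refine ⟨(algebraMap R K u)⁻¹ * x * y⁻¹,
      mul_mem (mul_mem (inv_mem_totallyPositive hu) hx) (inv_mem_totallyPositive hy),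
      ⟨u⁻¹, by rw [map_units_inv]; field_simp⟩, algebraMap R K ↑u⁻¹ * w, hM _ w hw, ?_⟩
    rw [map_units_inv]
    field_simp [hunit u]
    linear_combination hxy
  · rintro ⟨μ, hμ, ⟨ε, hε⟩, w, hw, hμy⟩
    have hε' : algebraMap R K ε = μ * y * x⁻¹ := by field_simp; exact hε.symm
    refine ⟨ε⁻¹, ?_, algebraMap R K ↑ε⁻¹ * w, hM _ w hw, ?_⟩
    · rw [map_units_inv, hε']
      exact inv_mem_totallyPositive (mul_mem (mul_mem hμ hy) (inv_mem_totallyPositive hx))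
    · rw [map_units_inv]
      field_simp [hunit ε]
      linear_combination hμy - hε

end TotallyPositive

theorem Ideal.isCoprime_iff_not_le_of_isMaximal {R : Type*} [CommRing R] {P I : Ideal R}
    (hP : P.IsMaximal) : IsCoprime P I ↔ ¬ I ≤ P := by
  rw [Ideal.isCoprime_iff_sup_eq]
  constructor
  · intro h hle
    exact hP.ne_top (sup_eq_left.mpr hle ▸ h)
  · intro h
    by_contra hne
    exact h (le_sup_right.trans (hP.eq_of_le hne le_sup_left).ge)

section Dedekind

variable {R K : Type*} [CommRing R] [IsDedekindDomain R] [Field K] [Algebra R K]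
  [IsFractionRing R K]

namespace FractionalIdeal

theorem mul_spanSingleton_le_spanSingleton_iff {I : FractionalIdeal R⁰ K} (hI : I ≠ 0)
    (x y : K) : I * spanSingleton R⁰ x ≤ spanSingleton R⁰ y ↔ ∃ w ∈ I⁻¹, x = y * w := by
  rw [mul_comm, ← le_div_iff_mul_le hI, div_eq_mul_inv, spanSingleton_le_iff_mem,
    mem_singleton_mul]

theorem mul_spanSingleton_le_one_iff {I : FractionalIdeal R⁰ K} (hI : I ≠ 0) (x : K) :
    I * spanSingleton R⁰ x ≤ 1 ↔ x ∈ I⁻¹ := by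
  rw [mul_comm, ← le_div_iff_mul_le hI, one_div, spanSingleton_le_iff_mem]

end FractionalIdeal

theorem isCoprime_span_singleton_iff_not_exists_mul {p : R} (hp : Prime p) {a b : Ideal R}
    (ha : a ≠ ⊥) {x : K}
    (hb : (b : FractionalIdeal R⁰ K) = a * FractionalIdeal.spanSingleton R⁰ x) :
    IsCoprime (Ideal.span {p}) b ↔
      ¬ ∃ w ∈ (a : FractionalIdeal R⁰ K)⁻¹, x = algebraMap R K p * w := by
  have hmax : (Ideal.span {p}).IsMaximal :=
    ((Ideal.span_singleton_prime hp.ne_zero).mpr hp).isMaximal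
      (by simpa only [ne_eq, Ideal.span_singleton_eq_bot] using hp.ne_zero)
  rw [Ideal.isCoprime_iff_not_le_of_isMaximal hmax, ← FractionalIdeal.coeIdeal_le_coeIdeal K,
    hb, FractionalIdeal.coeIdeal_span_singleton,
    FractionalIdeal.mul_spanSingleton_le_spanSingleton_iff
      (FractionalIdeal.coeIdeal_ne_zero.mpr ha)]

end Dedekind

theorem stmt_16_general
    (p r : ℕ)
    (F : Type*) [Field F] [NumberField F]
    (a : Ideal (𝓞 F)) (ha : a ≠ ⊥)
    (hinert : Prime (p : 𝓞 F))                                   -- p is inert in F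
    (J : Submodule ℤ F)
    (hJ : J = Submodule.restrictScalars ℤ
      ((((a : FractionalIdeal (nonZeroDivisors (𝓞 F)) F)⁻¹ :
          FractionalIdeal (nonZeroDivisors (𝓞 F)) F) : Submodule (𝓞 F) F)))  -- J = a⁻¹
    (TotPos : F → Prop) (hTP : ∀ x : F, TotPos x ↔ ∀ φ : F →+* ℝ, 0 < φ x) :
    -- (1) well-definedness and injectivity
    (∀ lam lam' : F, lam ∈ J → lam' ∈ J → TotPos lam → TotPos lam' →
      lam ≠ 0 → lam' ≠ 0 →
      (¬ ∃ w ∈ J, lam = (p : ℤ) • w) → (¬ ∃ w ∈ J, lam' = (p : ℤ) • w) →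
      ((∃ u : (𝓞 F)ˣ, TotPos (algebraMap (𝓞 F) F u) ∧
          ∃ w ∈ J, lam - (algebraMap (𝓞 F) F u) * lam' = ((p : ℤ) ^ r) • w)
        ↔ (∃ μ : F, TotPos μ ∧
            (∃ ε : (𝓞 F)ˣ, μ * lam' = (algebraMap (𝓞 F) F ε) * lam) ∧
            ∃ w ∈ J, μ * lam' - lam' = ((p : ℤ) ^ r) • w))) ∧
    -- (2) the image contains only, and
    (∀ b : Ideal (𝓞 F), IsCoprime (Ideal.span {(p : 𝓞 F)}) b →
      ∀ ν : F, TotPos ν →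
        (b : FractionalIdeal (nonZeroDivisors (𝓞 F)) F)
            = (a : FractionalIdeal (nonZeroDivisors (𝓞 F)) F)
              * FractionalIdeal.spanSingleton (nonZeroDivisors (𝓞 F)) ν →
        ν ∈ J ∧ ¬ ∃ w ∈ J, ν = (p : ℤ) • w) ∧
    -- (3) exactly, the classes over [a]
    (∀ lam : F, lam ∈ J → TotPos lam → lam ≠ 0 →
      (¬ ∃ w ∈ J, lam = (p : ℤ) • w) →
      ∃ b : Ideal (𝓞 F), IsCoprime (Ideal.span {(p : 𝓞 F)}) b ∧
        (b : FractionalIdeal (nonZeroDivisors (𝓞 F)) F)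
          = (a : FractionalIdeal (nonZeroDivisors (𝓞 F)) F)
            * FractionalIdeal.spanSingleton (nonZeroDivisors (𝓞 F)) lam) := by
  subst hJ
  obtain rfl : TotPos = (· ∈ totallyPositive F) := funext fun x => propext (hTP x)
  have ha' : (a : FractionalIdeal (𝓞 F)⁰ F) ≠ 0 := FractionalIdeal.coeIdeal_ne_zero.mpr ha
  have hp : ((p : ℤ) : F) = algebraMap (𝓞 F) F p := by simp
  simp only [Submodule.restrictScalars_mem, FractionalIdeal.mem_coe, zsmul_eq_mul, hp]
  refine ⟨fun lam lam' _ _ hpos hpos' hne hne' _ _ =>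
      exists_unit_sub_mul_mem_iff_exists_totallyPositive _ hpos hpos' hne hne',
    fun b hb ν _ hbν => ⟨?_, (isCoprime_span_singleton_iff_not_exists_mul hinert ha hbν).mp hb⟩,
    fun lam hlam _ _ hnd => ?_⟩
  · rw [← FractionalIdeal.mul_spanSingleton_le_one_iff ha', ← hbν]
    exact FractionalIdeal.coeIdeal_le_one
  · obtain ⟨b, hb⟩ := FractionalIdeal.le_one_iff_exists_coeIdeal.mp
      ((FractionalIdeal.mul_spanSingleton_le_one_iff ha' lam).mpr hlam)
    exact ⟨b, (isCoprime_span_singleton_iff_not_exists_mul hinert ha hb).mpr hnd, hb⟩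

/-- Let `F` be a totally real field with group of totally positive units
`U_F`, `a` a nonzero integral ideal coprime to the (inert) prime `p`, `J = a⁻¹`, and
`r ≥ 1`.  The map sending the `U_F`-orbit of a class `[λ] ∈ (a⁻¹ ∖ p a⁻¹)/p^r a⁻¹`, with
`λ` totally positive, to the class of the integral ideal `a·(λ)` in the narrow ray class
group `G_{p^r}` is a well-defined injection whose image is exactly the set of classes of
`G_{p^r}` mapping to the class of `a` in the narrow class group `G_1`.  Concretely:
(1) two totally positive elements `λ, λ'` of `a⁻¹ ∖ p a⁻¹` lie in the same
`U_F`-orbit mod `p^r a⁻¹` iff the ideals `a·(λ)` and `a·(λ')` agree in `G_{p^r}`, i.e.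
differ by a totally positive `μ` with `μ ≡ 1 mod p^r (a λ')⁻¹` (well-definedness and
injectivity); and the image is the fiber over `[a]`:
(2) if `b` is an integral ideal coprime to `p` with `b = a·(ν)` for a totally positive
`ν`, then `ν ∈ a⁻¹ ∖ p a⁻¹`;
(3) conversely, every totally positive `λ ∈ a⁻¹ ∖ p a⁻¹` yields an integral ideal
`b = a·(λ)` coprime to `p`. -/
theorem stmt_16
    (p r : ℕ) [Fact p.Prime] (hr : 1 ≤ r)
    (F : Type*) [Field F] [NumberField F]
    (htot : ∀ v : InfinitePlace F, v.IsReal)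
    (a : Ideal (𝓞 F)) (ha : a ≠ ⊥)
    (hinert : Prime (p : 𝓞 F))                                   -- p is inert in F
    (hcop : IsCoprime (Ideal.span {(p : 𝓞 F)}) a)                -- a is coprime to p
    (J : Submodule ℤ F)
    (hJ : J = Submodule.restrictScalars ℤ
      ((((a : FractionalIdeal (nonZeroDivisors (𝓞 F)) F)⁻¹ :
          FractionalIdeal (nonZeroDivisors (𝓞 F)) F) : Submodule (𝓞 F) F)))  -- J = a⁻¹
    (TotPos : F → Prop) (hTP : ∀ x : F, TotPos x ↔ ∀ φ : F →+* ℝ, 0 < φ x) :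
    -- (1) well-definedness and injectivity
    (∀ lam lam' : F, lam ∈ J → lam' ∈ J → TotPos lam → TotPos lam' →
      lam ≠ 0 → lam' ≠ 0 →
      (¬ ∃ w ∈ J, lam = (p : ℤ) • w) → (¬ ∃ w ∈ J, lam' = (p : ℤ) • w) →
      ((∃ u : (𝓞 F)ˣ, TotPos (algebraMap (𝓞 F) F u) ∧
          ∃ w ∈ J, lam - (algebraMap (𝓞 F) F u) * lam' = ((p : ℤ) ^ r) • w)
        ↔ (∃ μ : F, TotPos μ ∧
            (∃ ε : (𝓞 F)ˣ, μ * lam' = (algebraMap (𝓞 F) F ε) * lam) ∧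
            ∃ w ∈ J, μ * lam' - lam' = ((p : ℤ) ^ r) • w))) ∧
    -- (2) the image contains only, and
    (∀ b : Ideal (𝓞 F), IsCoprime (Ideal.span {(p : 𝓞 F)}) b →
      ∀ ν : F, TotPos ν →
        (b : FractionalIdeal (nonZeroDivisors (𝓞 F)) F)
            = (a : FractionalIdeal (nonZeroDivisors (𝓞 F)) F)
              * FractionalIdeal.spanSingleton (nonZeroDivisors (𝓞 F)) ν →
        ν ∈ J ∧ ¬ ∃ w ∈ J, ν = (p : ℤ) • w) ∧
    -- (3) exactly, the classes over [a]
    (∀ lam : F, lam ∈ J → TotPos lam → lam ≠ 0 →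
      (¬ ∃ w ∈ J, lam = (p : ℤ) • w) →
      ∃ b : Ideal (𝓞 F), IsCoprime (Ideal.span {(p : 𝓞 F)}) b ∧
        (b : FractionalIdeal (nonZeroDivisors (𝓞 F)) F)
          = (a : FractionalIdeal (nonZeroDivisors (𝓞 F)) F)
            * FractionalIdeal.spanSingleton (nonZeroDivisors (𝓞 F)) lam) :=
  stmt_16_general p r F a ha hinert J hJ TotPos hTP
end

section
/- Let F be a totally real field of degree n that is Galois over Q with p inert in F, and let u ∈ O_H[1/p]^×_− ⊗ Q be the Gross–Stark element for the narrow Hilbert class field H. If the narrow ideal class [a] is fixed by Gal(F/Q), then log_p(σ_a(u)) ∈ Q_p, where log_p is computed via the embedding H ⊂ H_p = F_p determined by the fixed prime p of H above p. -/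
/-- Let `F` be a totally real field of degree `n`, Galois over `ℚ`, with
`p` inert in `F`, `H` its narrow Hilbert class field, and `u ∈ 𝒪_H[1/p]^×_- ⊗ ℚ` the
Gross–Stark element.  Abstract setting as in Statement 12: `G = Gal(H/ℚ)` acts on the
narrow class group `C` and on `M = 𝒪_H[1/p]^×_- ⊗ ℚ`; `D ≤ G` is the decomposition group
of the fixed prime `𝔭 | p`, identified via `ρ` with `Gal(H_𝔭/ℚ_p)` where `L = H_𝔭 = F_p`;
`σ` is the Artin map, `ordp` the `𝔭`-adic valuation, `Δ` the smoothed partial zeta values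
at `0`, and `u` is characterized by `ordp (σ_𝔟 • u) = Δ 𝔟`.  If the narrow class `a` is
fixed by `Gal(F/ℚ)`, then `log_p (σ_a u)` lies in `ℚ_p ⊆ L`. -/
theorem stmt_18
    (p : ℕ) [Fact p.Prime]
    (G : Type*) [Group G]                -- Gal(H/ℚ)
    (C : Type*) [CommGroup C] [MulDistribMulAction G C]   -- narrow class group with Galois action
    (M : Type*) [AddCommGroup M] [DistribMulAction G M]   -- 𝒪_H[1/p]^×_- ⊗ ℚ, additively
    (D : Subgroup G)                     -- decomposition group at 𝔭
    (σ : C →* G)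
    (hσ : ∀ (η : G) (c : C), σ (η • c) = η * σ c * η⁻¹)
    (ordp : M → ℚ)
    (hord : ∀ η ∈ D, ∀ x : M, ordp (η • x) = ordp x)
    (Δ : C → ℚ)
    (hΔ : ∀ (η : G) (c : C), Δ (η • c) = Δ c)
    (u : M)
    (hu : ∀ c : C, ordp (σ c • u) = Δ c)
    (huniq : ∀ v w : M, (∀ c : C, ordp (σ c • v) = ordp (σ c • w)) → v = w)
    (L : Type*) [Field L] [Algebra ℚ_[p] L]               -- the completion H_𝔭 = F_p
    [FiniteDimensional ℚ_[p] L] [IsGalois ℚ_[p] L]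
    (ρ : D →* (L ≃ₐ[ℚ_[p]] L)) (hρ : Function.Surjective ρ)  -- D_𝔭 ≅ Gal(H_𝔭/ℚ_p)
    (logp : M → L)                                        -- the p-adic logarithm
    (hlog : ∀ (η : D) (x : M), logp ((η : G) • x) = ρ η (logp x))
    (a : C) (ha : ∀ η : G, η • a = a) :                   -- [a] is Galois-fixed
    ∃ q : ℚ_[p], logp (σ a • u) = algebraMap ℚ_[p] L q := by
  -- Step 1: u is fixed by every η ∈ D.
  have hufix : ∀ η ∈ D, η • u = u := by
    intro η hη
    refine huniq (η • u) u (fun c => ?_)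
    have hcomm : σ c * η = η * σ (η⁻¹ • c) := by
      have := hσ η⁻¹ c
      rw [this]
      group
    rw [hu c, smul_smul, hcomm, ← smul_smul, hord η hη, hu]
    have := hΔ η (η⁻¹ • c)
    rw [smul_inv_smul] at this
    exact this.symm
  -- Step 2: σ a commutes with every η, since a is Galois-fixed.
  have hcommA : ∀ η : G, η * σ a = σ a * η := by
    intro η
    have := hσ η a
    rw [ha η] at this
    conv_rhs => rw [this]
    group
  -- Step 3: σ a • u is fixed by D, hence logp (σ a • u) is Galois-fixed.
  have hfix : ∀ g : L ≃ₐ[ℚ_[p]] L, g (logp (σ a • u)) = logp (σ a • u) := by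
    intro g
    obtain ⟨η, rfl⟩ := hρ g
    rw [← hlog η (σ a • u), smul_smul, hcommA (η : G), ← smul_smul,
      hufix (η : G) η.2]
  -- Step 4: Galois-fixed elements lie in ℚ_p.
  have hmem : logp (σ a • u) ∈ (⊥ : IntermediateField ℚ_[p] L) := by
    have hb : IntermediateField.fixedField (⊤ : Subgroup (L ≃ₐ[ℚ_[p]] L)) =
        (⊥ : IntermediateField ℚ_[p] L) :=
      ((IsGalois.tfae (F := ℚ_[p]) (E := L)).out 0 1).mp ‹IsGalois ℚ_[p] L›
    rw [← hb]
    exact fun g => hfix g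
  obtain ⟨q, hq⟩ := IntermediateField.mem_bot.mp hmem
  exact ⟨q, hq.symm⟩
end
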